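/- arXiv:1106.0369 — 8 statements merged into one kernel-verified Lean document; each statement's English description precedes it below -/
import Mathlib

section
/- Let F be a finite union-closed family of finite sets with nonempty union, let S ∈ F be nonempty with |S| = k, and let s_k denote the minimum density over all union-closed families whose union has exactly k elements. Then Σ_{a ∈ S} |F_a| ≥ k · s_k · |F|. -/
/-- A finite family of finite sets is union-closed if it is closed under pairwise unions. -/
def UnionClosed (F : Finset (Finset ℕ)) : Prop :=
  ∀ A ∈ F, ∀ B ∈ F, A ∪ B ∈ F

/-- The density of a union-closed family `F`:
`D(F) = (1/(n·|F|)) · Σ_{A ∈ F} |A|` where `n = |⋃F|`. -/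
noncomputable def density (F : Finset (Finset ℕ)) : ℝ :=
  (∑ A ∈ F, (A.card : ℝ)) / (((F.sup id).card : ℝ) * (F.card : ℝ))

/-- `minDensity n` is the minimum density over all union-closed families whose
union has exactly `n` elements. -/
noncomputable def minDensity (n : ℕ) : ℝ :=
  sInf {d : ℝ | ∃ F : Finset (Finset ℕ),
    UnionClosed F ∧ (F.sup id).card = n ∧ d = density F}

lemma minDensity_le_density (H : Finset (Finset ℕ)) (hH : UnionClosed H) (k : ℕ)
    (hk : (H.sup id).card = k) : minDensity k ≤ density H := by
  apply csInf_le
  · refine ⟨0, ?_⟩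
    rintro d ⟨G, -, -, rfl⟩
    apply div_nonneg
    · exact Finset.sum_nonneg fun _ _ => by positivity
    · positivity
  · exact ⟨H, hH, hk, rfl⟩

lemma sum_card_ge (H : Finset (Finset ℕ)) (hH : UnionClosed H) (k : ℕ)
    (hk : (H.sup id).card = k) (hk1 : 1 ≤ k) (hHne : H.Nonempty) :
    (k : ℝ) * minDensity k * (H.card : ℝ) ≤ ∑ B ∈ H, (B.card : ℝ) := by
  have hcard : 0 < H.card := hHne.card_pos
  have hpos : (0 : ℝ) < ((k : ℝ) * (H.card : ℝ)) := by
    have : (0:ℝ) < (k:ℝ) := by exact_mod_cast hk1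
    have : (0:ℝ) < (H.card:ℝ) := by exact_mod_cast hcard
    positivity
  have h := minDensity_le_density H hH k hk
  rw [density, hk, le_div_iff₀ hpos] at h
  calc (k : ℝ) * minDensity k * (H.card : ℝ)
      = minDensity k * ((k : ℝ) * (H.card : ℝ)) := by ring
    _ ≤ _ := h

theorem stmt_0 (F : Finset (Finset ℕ)) (hUC : UnionClosed F)
    (hn : 1 ≤ (F.sup id).card) (S : Finset ℕ) (hS : S ∈ F) (hSne : S.Nonempty)
    (k : ℕ) (hk : S.card = k) :
    (∑ a ∈ S, ((F.filter (fun A => a ∈ A)).card : ℝ)) ≥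
      (k : ℝ) * minDensity k * (F.card : ℝ) := by
  have hk1 : 1 ≤ k := hk ▸ hSne.card_pos
  -- Step 1: double counting
  have step1 : (∑ a ∈ S, ((F.filter (fun A => a ∈ A)).card : ℝ))
      = ∑ A ∈ F, (((A ∩ S).card : ℕ) : ℝ) := by
    have : (∑ a ∈ S, (F.filter (fun A => a ∈ A)).card)
        = ∑ A ∈ F, (A ∩ S).card := by
      simp only [Finset.card_filter]
      rw [Finset.sum_comm]
      congr 1
      ext A
      rw [← Finset.card_filter]
      congr 1
      ext a
      simp [Finset.mem_inter, and_comm]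
    exact_mod_cast this
  rw [step1, ge_iff_le]
  -- Step 2: fiber decomposition along A ↦ A ∪ S
  set T : Finset (Finset ℕ) := F.image (fun A => A ∪ S) with hT
  have hmaps : ∀ A ∈ F, A ∪ S ∈ T := fun A hA => Finset.mem_image_of_mem _ hA
  rw [← Finset.sum_fiberwise_of_maps_to hmaps (fun A => (((A ∩ S).card : ℕ) : ℝ))]
  have hcardF : (F.card : ℝ) = ∑ V ∈ T, ((F.filter (fun A => A ∪ S = V)).card : ℝ) := by
    have : (∑ A ∈ F, (1:ℝ)) = ∑ V ∈ T, ∑ A ∈ F.filter (fun A => A ∪ S = V), (1:ℝ) :=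
      (Finset.sum_fiberwise_of_maps_to hmaps (fun _ => (1:ℝ))).symm
    simpa using this
  rw [hcardF, Finset.mul_sum]
  apply Finset.sum_le_sum
  intro V hV
  -- Per-fiber analysis
  set C : Finset (Finset ℕ) := F.filter (fun A => A ∪ S = V) with hC
  set D : Finset (Finset ℕ) := C.image (fun A => A ∩ S) with hD
  have hmemC : ∀ A ∈ C, A ∈ F ∧ A ∪ S = V := by
    intro A hA
    simpa [hC] using hA
  -- injectivity of A ↦ A ∩ S on C
  have hinj : ∀ A₁ ∈ C, ∀ A₂ ∈ C, A₁ ∩ S = A₂ ∩ S → A₁ = A₂ := by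
    intro A₁ h₁ A₂ h₂ heq
    obtain ⟨-, hV₁⟩ := hmemC A₁ h₁
    obtain ⟨-, hV₂⟩ := hmemC A₂ h₂
    ext x
    by_cases hx : x ∈ S
    · constructor
      · intro h
        have : x ∈ A₁ ∩ S := Finset.mem_inter.mpr ⟨h, hx⟩
        rw [heq] at this
        exact (Finset.mem_inter.mp this).1
      · intro h
        have : x ∈ A₂ ∩ S := Finset.mem_inter.mpr ⟨h, hx⟩
        rw [← heq] at this
        exact (Finset.mem_inter.mp this).1
    · constructor
      · intro h
        have hxV : x ∈ V := by rw [← hV₁]; exact Finset.mem_union_left _ h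
        have hx2 : x ∈ A₂ ∪ S := by rw [hV₂]; exact hxV
        rcases Finset.mem_union.mp hx2 with h' | h'
        · exact h'
        · exact absurd h' hx
      · intro h
        have hxV : x ∈ V := by rw [← hV₂]; exact Finset.mem_union_left _ h
        have hx1 : x ∈ A₁ ∪ S := by rw [hV₁]; exact hxV
        rcases Finset.mem_union.mp hx1 with h' | h'
        · exact h'
        · exact absurd h' hx
  have hsum : ∑ A ∈ C, (((A ∩ S).card : ℕ) : ℝ) = ∑ B ∈ D, ((B.card : ℕ) : ℝ) := by
    rw [hD, Finset.sum_image hinj]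
  have hcardCD : C.card = D.card := (Finset.card_image_of_injOn hinj).symm
  -- V ∈ C, hence S ∈ D
  have hVF : V ∈ F := by
    obtain ⟨A₀, hA₀, rfl⟩ := Finset.mem_image.mp hV
    exact hUC A₀ hA₀ S hS
  have hSV : S ⊆ V := by
    obtain ⟨A₀, hA₀, rfl⟩ := Finset.mem_image.mp hV
    exact Finset.subset_union_right
  have hVC : V ∈ C := by
    rw [hC, Finset.mem_filter]
    exact ⟨hVF, Finset.union_eq_left.mpr hSV⟩
  have hSD : S ∈ D := by
    rw [hD, Finset.mem_image]
    exact ⟨V, hVC, Finset.inter_eq_right.mpr hSV⟩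
  -- D is union closed
  have hDuc : UnionClosed D := by
    intro B₁ hB₁ B₂ hB₂
    obtain ⟨A₁, hA₁, rfl⟩ := Finset.mem_image.mp hB₁
    obtain ⟨A₂, hA₂, rfl⟩ := Finset.mem_image.mp hB₂
    obtain ⟨hA₁F, hA₁V⟩ := hmemC A₁ hA₁
    obtain ⟨hA₂F, hA₂V⟩ := hmemC A₂ hA₂
    have hU : A₁ ∪ A₂ ∈ C := by
      rw [hC, Finset.mem_filter]
      refine ⟨hUC A₁ hA₁F A₂ hA₂F, ?_⟩
      have hA₁sub : A₁ ⊆ V := hA₁V ▸ Finset.subset_union_left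
      rw [Finset.union_assoc, hA₂V]
      exact Finset.union_eq_right.mpr hA₁sub
    have : (A₁ ∪ A₂) ∩ S = A₁ ∩ S ∪ A₂ ∩ S := Finset.union_inter_distrib_right ..
    rw [← this]
    exact Finset.mem_image_of_mem _ hU
  -- ground set of D is S
  have hDsup : D.sup id = S := by
    apply le_antisymm
    · refine Finset.sup_le fun B hB => ?_
      obtain ⟨A, -, rfl⟩ := Finset.mem_image.mp hB
      exact Finset.inter_subset_right
    · exact Finset.le_sup (f := id) hSD
  have hDk : (D.sup id).card = k := by rw [hDsup, hk]
  have := sum_card_ge D hDuc k hDk hk1 ⟨S, hSD⟩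
  rw [hsum, hcardCD]
  exact this
end

section
/- Let F be a finite union-closed family of finite sets, let A ∈ F be a minimal nonempty set of F (i.e., no nonempty proper subset of A lies in F), and let G := F \ {A}. If there exist a, b ∈ ⋃G such that G_a = G_b but F_a ≠ F_b, then either a ∈ B for every nonempty B ∈ F, or b ∈ B for every nonempty B ∈ F. -/
lemma stmt_2_aux (F : Finset (Finset ℕ)) (hUC : UnionClosed F)
    (A : Finset ℕ) (hA : A ∈ F)
    (hmin : ∀ B ∈ F, B ⊂ A → B = ∅)
    (G : Finset (Finset ℕ)) (hG : G = F.erase A)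
    (a b : ℕ) (haA : a ∈ A) (hbA : b ∉ A)
    (hGab : G.filter (fun S => a ∈ S) = G.filter (fun S => b ∈ S)) :
    ∀ B ∈ F, B.Nonempty → a ∈ B := by
  intro B hB hBne
  by_contra haB
  have hBA : B ≠ A := fun h => haB (h ▸ haA)
  have hBG : B ∈ G := hG ▸ Finset.mem_erase.mpr ⟨hBA, hB⟩
  have hbB : b ∉ B := by
    intro hbB
    have : B ∈ G.filter (fun S => a ∈ S) :=
      hGab ▸ Finset.mem_filter.mpr ⟨hBG, hbB⟩
    exact haB (Finset.mem_filter.mp this).2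
  have hU : A ∪ B ∈ F := hUC A hA B hB
  have hUA : A ∪ B ≠ A := by
    intro h
    have hsub : B ⊆ A := by rw [← h]; exact Finset.subset_union_right
    have hss : B ⊂ A := ⟨hsub, fun h2 => hBA (Finset.Subset.antisymm hsub h2)⟩
    exact hBne.ne_empty (hmin B hB hss)
  have hUG : A ∪ B ∈ G := hG ▸ Finset.mem_erase.mpr ⟨hUA, hU⟩
  have hmem : A ∪ B ∈ G.filter (fun S => b ∈ S) :=
    hGab ▸ Finset.mem_filter.mpr ⟨hUG, Finset.mem_union_left B haA⟩
  rcases Finset.mem_union.mp (Finset.mem_filter.mp hmem).2 with h | h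
  exacts [hbA h, hbB h]

theorem stmt_2 (F : Finset (Finset ℕ)) (hUC : UnionClosed F)
    (A : Finset ℕ) (hA : A ∈ F) (hAne : A.Nonempty)
    (hmin : ∀ B ∈ F, B ⊂ A → B = ∅)
    (G : Finset (Finset ℕ)) (hG : G = F.erase A)
    (a b : ℕ) (ha : a ∈ G.sup id) (hb : b ∈ G.sup id)
    (hGab : G.filter (fun S => a ∈ S) = G.filter (fun S => b ∈ S))
    (hFab : F.filter (fun S => a ∈ S) ≠ F.filter (fun S => b ∈ S)) :
    (∀ B ∈ F, B.Nonempty → a ∈ B) ∨ (∀ B ∈ F, B.Nonempty → b ∈ B) := by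
  have hF : F = insert A G := by rw [hG]; exact (Finset.insert_erase hA).symm
  have hiff : ¬ (a ∈ A ↔ b ∈ A) := by
    intro h
    apply hFab
    rw [hF, Finset.filter_insert, Finset.filter_insert, hGab]
    by_cases ha' : a ∈ A
    · rw [if_pos ha', if_pos (h.mp ha')]
    · rw [if_neg ha', if_neg (fun hb' => ha' (h.mpr hb'))]
  by_cases haA : a ∈ A
  · have hbA : b ∉ A := fun hbA => hiff ⟨fun _ => hbA, fun _ => haA⟩
    exact Or.inl (stmt_2_aux F hUC A hA hmin G hG a b haA hbA hGab)
  · have hbA : b ∈ A := by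
      by_contra hbA
      exact hiff ⟨fun h => absurd h haA, fun h => absurd h hbA⟩
    exact Or.inr (stmt_2_aux F hUC A hA hmin G hG b a hbA haA hGab.symm)
end

section
/- For every finite union-closed family F of finite sets with |⋃F| ≥ 2 and |F| < |⋃F|, there exist distinct elements a, b ∈ ⋃F such that F_a = F_b. -/
lemma sup_mem_of_unionClosed {F : Finset (Finset ℕ)} (hUC : UnionClosed F) :
    ∀ G : Finset (Finset ℕ), G.Nonempty → G ⊆ F → G.sup id ∈ F := by
  intro G hne
  induction hne using Finset.Nonempty.cons_induction with
  | singleton a => intro hG; simpa using hG (Finset.mem_singleton_self _)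
  | cons a s ha hs ih =>
      intro hG
      rw [Finset.sup_cons]
      have h1 : a ∈ F := hG (Finset.mem_cons_self a s)
      have h2 : s.sup id ∈ F := ih (fun x hx => hG (Finset.mem_cons_of_mem hx))
      exact hUC a h1 (s.sup id) h2

theorem stmt_3 (F : Finset (Finset ℕ)) (hUC : UnionClosed F)
    (hn : 2 ≤ (F.sup id).card) (hcard : F.card < (F.sup id).card) :
    ∃ a ∈ F.sup id, ∃ b ∈ F.sup id, a ≠ b ∧
      F.filter (fun S => a ∈ S) = F.filter (fun S => b ∈ S) := by
  classical
  set U := F.sup id with hU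
  have hFne : F.Nonempty := by
    rcases Finset.eq_empty_or_nonempty F with h | h
    · rw [hU, h] at hn; simp at hn
    · exact h
  set f : ℕ → Finset ℕ := fun x =>
    if h : (F.filter (fun S => x ∉ S)).Nonempty then (F.filter (fun S => x ∉ S)).sup id
    else U with hf
  have hmaps : ∀ x ∈ U, f x ∈ F := by
    intro x hx
    by_cases h : (F.filter (fun S => x ∉ S)).Nonempty
    · simp only [hf, dif_pos h]
      exact sup_mem_of_unionClosed hUC _ h (Finset.filter_subset _ _)
    · simp only [hf, dif_neg h]
      exact sup_mem_of_unionClosed hUC F hFne (le_refl F)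
  have key : ∀ x ∈ U, ∀ y ∈ U, f x = f y → ∀ S ∈ F, x ∈ S → y ∈ S := by
    intro x hx y hy hfxy S hS hxS
    by_contra hyS
    have hmem : S ∈ F.filter (fun T => y ∉ T) := Finset.mem_filter.2 ⟨hS, hyS⟩
    have hne : (F.filter (fun T => y ∉ T)).Nonempty := ⟨S, hmem⟩
    have hfy : f y = (F.filter (fun T => y ∉ T)).sup id := dif_pos hne
    have hSsub : S ⊆ (F.filter (fun T => y ∉ T)).sup id := Finset.le_sup (f := id) hmem
    have hy' : y ∉ (F.filter (fun T => y ∉ T)).sup id := by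
      simp only [Finset.mem_sup, Finset.mem_filter, id]
      rintro ⟨T, ⟨_, hT⟩, hyT⟩
      exact hT hyT
    by_cases h : (F.filter (fun T => x ∉ T)).Nonempty
    · have hfx : f x = (F.filter (fun T => x ∉ T)).sup id := dif_pos h
      have hx' : x ∉ (F.filter (fun T => x ∉ T)).sup id := by
        simp only [Finset.mem_sup, Finset.mem_filter, id]
        rintro ⟨T, ⟨_, hT⟩, hxT⟩
        exact hT hxT
      exact hx' (by rw [← hfx, hfxy, hfy]; exact hSsub hxS)
    · have hfx : f x = U := dif_neg h
      exact hy' (by rw [← hfy, ← hfxy, hfx]; exact hy)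
  obtain ⟨a, ha, b, hb, hab, hfab⟩ :=
    Finset.exists_ne_map_eq_of_card_lt_of_maps_to hcard hmaps
  refine ⟨a, ha, b, hb, hab, ?_⟩
  ext S
  simp only [Finset.mem_filter]
  constructor
  · rintro ⟨h1, h2⟩; exact ⟨h1, key a ha b hb hfab S h1 h2⟩
  · rintro ⟨h1, h2⟩; exact ⟨h1, key b hb a ha hfab.symm S h1 h2⟩
end

section
/- Let n ≥ 1 be a natural number and set k := ⌈log₂ n⌉. Then the family F := {A : A ⊆ {1, …, k}} ∪ {{1, 2, …, n}} is union-closed with |⋃F| = n, its density equals D(F) = (k·2^{k−1} + n)/(n(2^k + 1)), and consequently s_n ≤ (k·2^{k−1} + n)/(n(2^k + 1)). -/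
open Finset

theorem Nat.clog_lt_self {b n : ℕ} (hb : 1 < b) (hn : n ≠ 0) : Nat.clog b n < n := by
  have hpow : n ≤ b ^ (n - 1) :=
    calc n ≤ 2 ^ (n - 1) := by have := (n - 1).lt_two_pow_self; omega
      _ ≤ b ^ (n - 1) := Nat.pow_le_pow_left hb _
  have := Nat.clog_le_of_le_pow hpow
  omega

theorem Finset.sum_card_powerset {α : Type*} [DecidableEq α] (s : Finset α) :
    ∑ A ∈ s.powerset, #A = #s * 2 ^ (#s - 1) := by
  have htwice : 2 * ∑ A ∈ s.powerset, #A = #s * 2 ^ #s :=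
    calc 2 * ∑ A ∈ s.powerset, #A = ∑ A ∈ s.powerset, (#(s \ A) + #A) := by
          rw [two_mul, sum_add_distrib]
          congr 1
          refine sum_nbij' (s \ ·) (s \ ·) ?_ ?_ ?_ ?_ ?_ <;> simp +contextual [mem_powerset]
      _ = ∑ A ∈ s.powerset, #s :=
          sum_congr rfl fun A hA => card_sdiff_add_card_eq_card (mem_powerset.mp hA)
      _ = #s * 2 ^ #s := by rw [sum_const, card_powerset, smul_eq_mul, mul_comm]
  cases h : #s with
  | zero => simp_all
  | succ m => rw [h, pow_succ] at htwice; simp only [Nat.add_sub_cancel]; linarith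

section PowersetWithTop

variable {α : Type*} {s t : Finset α}

theorem disjoint_powerset_singleton_of_ssubset (hst : s ⊂ t) : Disjoint s.powerset {t} :=
  disjoint_singleton_right.mpr fun h => hst.not_subset (mem_powerset.mp h)

variable [DecidableEq α]

theorem sup_id_powerset_union_singleton (hst : s ⊆ t) : (s.powerset ∪ {t}).sup id = t := by
  rw [sup_union, sup_singleton, id]
  exact sup_eq_right.mpr (Finset.sup_le fun A hA => (mem_powerset.mp hA).trans hst)

theorem card_powerset_union_singleton (hst : s ⊂ t) : #(s.powerset ∪ {t}) = 2 ^ #s + 1 := by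
  rw [card_union_of_disjoint (disjoint_powerset_singleton_of_ssubset hst), card_powerset,
    card_singleton]

end PowersetWithTop

section UnionClosedFamilies

variable {s t : Finset ℕ}

theorem unionClosed_powerset_union_singleton (hst : s ⊆ t) :
    UnionClosed (s.powerset ∪ {t}) := by
  intro A hA B hB
  simp only [mem_union, mem_powerset, mem_singleton] at hA hB ⊢
  rcases hA with hA | rfl <;> rcases hB with hB | rfl
  · exact Or.inl (union_subset hA hB)
  · exact Or.inr (union_eq_right.mpr (hA.trans hst))
  · exact Or.inr (union_eq_left.mpr (hB.trans hst))
  · exact Or.inr (union_self _)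

theorem density_powerset_union_singleton (hst : s ⊂ t) :
    density (s.powerset ∪ {t}) = (#s * 2 ^ (#s - 1) + #t : ℝ) / (#t * (2 ^ #s + 1)) := by
  rw [density, sup_id_powerset_union_singleton hst.subset, card_powerset_union_singleton hst,
    ← Nat.cast_sum, sum_union (disjoint_powerset_singleton_of_ssubset hst), sum_card_powerset,
    sum_singleton]
  push_cast
  ring

theorem minDensity_le_density_s6 {F : Finset (Finset ℕ)} (hF : UnionClosed F) :
    minDensity #(F.sup id) ≤ density F :=
  csInf_le ⟨0, by rintro _ ⟨G, -, -, rfl⟩; unfold density; positivity⟩ ⟨F, hF, rfl, rfl⟩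

end UnionClosedFamilies

/-- For `n ≥ 1` and `k = ⌈log₂ n⌉`, the family
`F = {A : A ⊆ {1,…,k}} ∪ {{1,…,n}}` is union-closed with `|⋃F| = n`, its density
is `(k·2^(k-1) + n)/(n·(2^k + 1))`, hence `s_n ≤ (k·2^(k-1) + n)/(n·(2^k + 1))`. -/
theorem stmt_6 (n : ℕ) (hn : 1 ≤ n) (k : ℕ) (hk : k = ⌈Real.logb 2 (n : ℝ)⌉₊)
    (F : Finset (Finset ℕ))
    (hF : F = (Finset.Icc 1 k).powerset ∪ {Finset.Icc 1 n}) :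
    UnionClosed F ∧ (F.sup id).card = n ∧
      density F = ((k : ℝ) * 2 ^ (k - 1) + (n : ℝ)) / ((n : ℝ) * (2 ^ k + 1)) ∧
      minDensity n ≤ ((k : ℝ) * 2 ^ (k - 1) + (n : ℝ)) / ((n : ℝ) * (2 ^ k + 1)) := by
  have hkn : k < n := by
    rw [hk, ← Nat.cast_ofNat, Real.natCeil_logb_natCast]
    exact Nat.clog_lt_self one_lt_two (by omega)
  have hst : Icc 1 k ⊂ Icc 1 n := by
    refine ssubset_of_subset_of_ne (Icc_subset_Icc_right hkn.le) fun h => ?_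
    simpa [hkn.ne] using congrArg card h
  have hcard_k : #(Icc 1 k) = k := by simp
  have hcard_n : #(Icc 1 n) = n := by simp
  have hunion : #(F.sup id) = n := by
    rw [hF, sup_id_powerset_union_singleton hst.subset, hcard_n]
  have hdensity := density_powerset_union_singleton hst
  rw [hcard_k, hcard_n, ← hF] at hdensity
  have hclosed : UnionClosed F := hF ▸ unionClosed_powerset_union_singleton hst.subset
  exact ⟨hclosed, hunion, hdensity, (hunion ▸ minDensity_le_density_s6 hclosed).trans_eq hdensity⟩
end

section
/- Let F be a finite union-closed family of finite sets with n := |⋃F| ≥ 1, and let k be the minimum cardinality of a nonempty set in F. If k ≤ n/2, then max_{a ∈ ⋃F} |F_a| ≥ (k/n)·|F|. -/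
theorem stmt_10 (F : Finset (Finset ℕ)) (hUC : UnionClosed F)
    (n : ℕ) (hn : n = (F.sup id).card) (hn1 : 1 ≤ n)
    (k : ℕ) (hk : ∃ S ∈ F, S.Nonempty ∧ S.card = k)
    (hkmin : ∀ S ∈ F, S.Nonempty → k ≤ S.card)
    (hkn : (k : ℝ) ≤ (n : ℝ) / 2) :
    ∃ a ∈ F.sup id, ((F.filter (fun S => a ∈ S)).card : ℝ) ≥
      ((k : ℝ) / (n : ℝ)) * (F.card : ℝ) := by
  obtain ⟨S, hSF, hSne, hSk⟩ := hk
  have hFne : F.Nonempty := ⟨S, hSF⟩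
  set U := F.sup id with hU
  -- U ∈ F
  have hUF : U ∈ F := by
    have : F.sup' hFne id ∈ (F : Set (Finset ℕ)) :=
      Finset.sup'_mem (F : Set (Finset ℕ)) (fun a ha b hb => hUC a ha b hb) F hFne id
        (fun b hb => hb)
    rwa [Finset.sup'_eq_sup] at this
  have hUcard : U.card = n := hn.symm
  have h2k : 2 * k ≤ n := by
    have : (2 * k : ℝ) ≤ n := by push_cast; linarith
    exact_mod_cast this
  -- key sum bound
  have hsum : k * F.card ≤ ∑ T ∈ F, T.card := by
    by_cases h0 : (∅ : Finset ℕ) ∈ F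
    · have hUne : U ≠ ∅ := by
        intro h; rw [h] at hUcard; simp at hUcard; omega
      have hU' : U ∈ F.erase ∅ := Finset.mem_erase.mpr ⟨hUne, hUF⟩
      have hFc : 2 ≤ F.card := by
        have : ({∅, U} : Finset (Finset ℕ)) ⊆ F := by
          intro x hx; simp at hx; rcases hx with h | h <;> simp [h, h0, hUF]
        calc 2 = ({∅, U} : Finset (Finset ℕ)).card := by
                  rw [Finset.card_insert_of_notMem (by simpa using (Ne.symm hUne)),
                    Finset.card_singleton]
             _ ≤ F.card := Finset.card_le_card this
      have e1 : ∑ T ∈ F, T.card = ∑ T ∈ F.erase ∅, T.card := by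
        rw [← Finset.add_sum_erase F _ h0]; simp
      have e2 : ∑ T ∈ F.erase ∅, T.card
          = U.card + ∑ T ∈ (F.erase ∅).erase U, T.card :=
        (Finset.add_sum_erase _ _ hU').symm
      have e3 : k * ((F.erase ∅).erase U).card ≤ ∑ T ∈ (F.erase ∅).erase U, T.card := by
        calc k * ((F.erase ∅).erase U).card = ∑ _T ∈ (F.erase ∅).erase U, k := by
              rw [Finset.sum_const, smul_eq_mul, mul_comm]
          _ ≤ ∑ T ∈ (F.erase ∅).erase U, T.card := by
              refine Finset.sum_le_sum (fun T hT => ?_)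
              have hT1 := Finset.mem_erase.mp hT
              have hT2 := Finset.mem_erase.mp hT1.2
              exact hkmin T hT2.2 (Finset.nonempty_iff_ne_empty.mpr hT2.1)
      have ec : ((F.erase ∅).erase U).card = F.card - 2 := by
        rw [Finset.card_erase_of_mem hU', Finset.card_erase_of_mem h0]; omega
      rw [e1, e2]
      calc k * F.card = 2 * k + k * (F.card - 2) := by
            have : F.card - 2 + 2 = F.card := by omega
            nlinarith [Nat.sub_add_cancel hFc]
        _ ≤ U.card + ∑ T ∈ (F.erase ∅).erase U, T.card := by
            have := e3; rw [ec] at this; omega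
    · calc k * F.card = ∑ _T ∈ F, k := by rw [Finset.sum_const, smul_eq_mul, mul_comm]
        _ ≤ ∑ T ∈ F, T.card := Finset.sum_le_sum (fun T hT =>
            hkmin T hT (Finset.nonempty_iff_ne_empty.mpr (fun h => h0 (h ▸ hT))))
  -- double counting
  have hdc : ∑ a ∈ U, (F.filter (fun S => a ∈ S)).card = ∑ T ∈ F, T.card := by
    have : ∀ a, (F.filter (fun S => a ∈ S)).card = ∑ T ∈ F, (if a ∈ T then 1 else 0) := by
      intro a; rw [Finset.card_filter]
    simp_rw [this]
    rw [Finset.sum_comm]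
    refine Finset.sum_congr rfl (fun T hT => ?_)
    have hTU : T ⊆ U := Finset.le_sup (f := id) hT
    rw [← Finset.card_filter]
    congr 1
    exact Finset.filter_mem_eq_inter.trans (Finset.inter_eq_right.mpr hTU)
  have hUne : U.Nonempty := Finset.card_pos.mp (by omega)
  -- pick element with at least average count
  have hex : ∃ a ∈ U, k * F.card ≤ n * (F.filter (fun S => a ∈ S)).card := by
    by_contra hcon
    push_neg at hcon
    have : ∑ a ∈ U, n * (F.filter (fun S => a ∈ S)).card < ∑ a ∈ U, k * F.card := by
      apply Finset.sum_lt_sum_of_nonempty hUne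
      intro a ha; exact hcon a ha
    rw [← Finset.mul_sum, hdc, Finset.sum_const, smul_eq_mul, hUcard] at this
    nlinarith [hsum]
  obtain ⟨a, haU, ha⟩ := hex
  refine ⟨a, haU, ?_⟩
  have hn0 : (0:ℝ) < n := by exact_mod_cast hn1
  rw [ge_iff_le, div_mul_eq_mul_div, div_le_iff₀ hn0]
  have : (k * F.card : ℝ) ≤ n * (F.filter (fun S => a ∈ S)).card := by exact_mod_cast ha
  linarith
end

section
/- Let F be a finite union-closed family of finite sets containing at least one nonempty set, and let k ≥ 1 be the minimum cardinality of a nonempty set in F. Then max_{a ∈ ⋃F} |F_a| ≥ s_k · |F| ≥ (log₂(k)/(2k)) · |F|. -/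
/-!
Fix `S ∈ F` with `|S| = k` and group the members of `F` by `A ∪ S`. On each group `A ↦ A ∩ S` is
injective onto a union-closed family with union `S`, so the group's total trace is at least
`s_k · k` times its size. Summing, `∑_{a ∈ S} |F_a| = ∑_{A ∈ F} |A ∩ S| ≥ s_k · k · |F|`, hence
some `a ∈ S` has `|F_a| ≥ s_k |F|`.

The bound `s_n ≥ log₂ n / (2n)` means `|F| log₂ n ≤ 2 ∑_{A ∈ F} |A|` for union-closed `F` on
`n` points. If `n ≤ |F|` this follows from Reimer's inequality `|F| log₂ |F| ≤ 2 ∑ |A|`.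
Otherwise delete a point of least frequency: either it has a twin and the family shrinks to
`n - 1` points, or the family splits into two union-closed families on `n - 1` points; the loss
`|F| (log₂ n - log₂ (n - 1))` is at most `2` because `|F| < n`.
-/

open Finset Real

namespace UnionClosed

variable {F : Finset (Finset ℕ)}

theorem supClosed (hF : UnionClosed F) : SupClosed (F : Set (Finset ℕ)) :=
  fun _ hA _ hB => hF _ hA _ hB

theorem sup_mem (hF : UnionClosed F) (hne : F.Nonempty) : F.sup id ∈ F :=
  hF.supClosed.finsetSup_mem hne fun _ h => h

theorem filter (hF : UnionClosed F) {p : Finset ℕ → Prop} [DecidablePred p]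
    (hp : ∀ A B, p A → p B → p (A ∪ B)) : UnionClosed (F.filter p) := by
  simp only [UnionClosed, mem_filter]
  exact fun A hA B hB => ⟨hF A hA.1 B hB.1, hp A B hA.2 hB.2⟩

theorem image (hF : UnionClosed F) {f : Finset ℕ → Finset ℕ}
    (hf : ∀ A B, f (A ∪ B) = f A ∪ f B) : UnionClosed (F.image f) := by
  simp only [UnionClosed, mem_image]
  rintro _ ⟨A, hA, rfl⟩ _ ⟨B, hB, rfl⟩
  exact ⟨A ∪ B, hF A hA B hB, hf A B⟩

end UnionClosed

theorem sum_le_card_mul_sub_logb {ι : Type*} {s : Finset ι} (hs : s.Nonempty) {e : ι → ℝ}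
    {n : ℝ} (h : ∑ i ∈ s, (2 : ℝ) ^ e i ≤ 2 ^ n) : ∑ i ∈ s, e i ≤ #s * (n - logb 2 #s) := by
  have hm : (0 : ℝ) < #s := by simp [hs]
  set c := n - logb 2 #s
  have hc : (2 : ℝ) ^ n = 2 ^ c * #s := by
    rw [rpow_sub two_pos, rpow_logb two_pos (by norm_num) hm, div_mul_cancel₀ _ hm.ne']
  -- Jensen for `2 ^ ·`, via its tangent line at `c`
  have htangent : ∀ i ∈ s, 2 ^ c * (1 + (e i - c) * log 2) ≤ 2 ^ e i := fun i _ => by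
    calc 2 ^ c * (1 + (e i - c) * log 2) ≤ 2 ^ c * exp ((e i - c) * log 2) := by
          gcongr; linarith [add_one_le_exp ((e i - c) * log 2)]
      _ = 2 ^ e i := by
          rw [mul_comm _ (log 2), ← rpow_def_of_pos two_pos, ← rpow_add two_pos, add_sub_cancel]
  have hsum := (sum_le_sum htangent).trans (h.trans hc.le)
  rw [← mul_sum, sum_add_distrib, ← sum_mul, sum_sub_distrib, sum_const, sum_const,
    nsmul_eq_mul, nsmul_eq_mul, mul_one] at hsum
  have h2c : (0 : ℝ) < 2 ^ c := by positivity
  have hlog : 0 < log 2 := log_pos one_lt_two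
  nlinarith [mul_pos h2c hlog]

section Reimer

variable {F : Finset (Finset ℕ)} {A B C Z : Finset ℕ}

open Classical in
noncomputable def upperCovers (F : Finset (Finset ℕ)) (A : Finset ℕ) : Finset (Finset ℕ) :=
  F.filter fun B => Minimal (fun C => C ∈ F ∧ A ⊂ C) B

theorem mem_upperCovers : B ∈ upperCovers F A ↔ Minimal (fun C => C ∈ F ∧ A ⊂ C) B := by
  classical
  rw [upperCovers, mem_filter, and_iff_right_of_imp fun h => h.prop.1]

theorem upperCovers_subset : upperCovers F A ⊆ F :=
  fun _ h => (mem_upperCovers.1 h).prop.1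

theorem exists_mem_upperCovers_subset (hB : B ∈ F) (hAB : A ⊂ B) :
    ∃ C ∈ upperCovers F A, C ⊆ B :=
  let ⟨C, hCB, hC⟩ := exists_minimal_le_of_wellFoundedLT _ B ⟨hB, hAB⟩
  ⟨C, mem_upperCovers.2 hC, hCB⟩

theorem eq_of_mem_upperCovers (hB : B ∈ upperCovers F A) (hC : C ∈ F) (hAC : A ⊆ C)
    (hCB : C ⊂ B) : C = A := by
  by_contra hne
  exact hCB.2 ((mem_upperCovers.1 hB).2 ⟨hC, ssubset_of_subset_of_ne hAC (Ne.symm hne)⟩ hCB.1)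

/-- Junk value `0` when `B ⊆ A`. -/
noncomputable def sdiffMin (A B : Finset ℕ) : ℕ :=
  sInf (↑(B \ A) : Set ℕ)

theorem sdiffMin_mem (h : A ⊂ B) : sdiffMin A B ∈ B \ A :=
  Nat.sInf_mem (coe_nonempty.2 (sdiff_nonempty.2 h.2))

theorem card_filter_mem_upperCovers_le (hF : UnionClosed F) (B : Finset ℕ) :
    #{A ∈ F | B ∈ upperCovers F A} ≤ #B := by
  refine card_le_card_of_injOn (sdiffMin · B) (fun A hA => ?_) fun A₁ hA₁ A₂ hA₂ h => ?_
  · exact (mem_sdiff.1 (sdiffMin_mem (mem_upperCovers.1 (mem_filter.1 hA).2).prop.2)).1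
  · simp only [coe_filter, Set.mem_ofPred_eq] at hA₁ hA₂
    have hB₁ := mem_upperCovers.1 hA₁.2
    have hB₂ := mem_upperCovers.1 hA₂.2
    have hx₁ := mem_sdiff.1 (sdiffMin_mem hB₁.prop.2)
    have hx₂ := mem_sdiff.1 (sdiffMin_mem hB₂.prop.2)
    simp only at h
    rw [← h] at hx₂
    -- `A₁ ∪ A₂ ⊂ B` misses `sdiffMin A₁ B`, so it lies between each `Aᵢ` and its cover `B`
    have hlt : A₁ ∪ A₂ ⊂ B := (ssubset_iff_of_subset (union_subset hB₁.prop.2.1 hB₂.prop.2.1)).2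
      ⟨_, hx₁.1, by simp [hx₁.2, hx₂.2]⟩
    have hU := hF _ hA₁.1 _ hA₂.1
    rw [← eq_of_mem_upperCovers hA₁.2 hU subset_union_left hlt,
      eq_of_mem_upperCovers hA₂.2 hU subset_union_right hlt]

theorem sum_card_upperCovers_le (hF : UnionClosed F) :
    ∑ A ∈ F, #(upperCovers F A) ≤ ∑ B ∈ F, #B := by
  classical
  calc ∑ A ∈ F, #(upperCovers F A)
      = ∑ A ∈ F, #(F.bipartiteAbove (fun A B => B ∈ upperCovers F A) A) := by
        refine sum_congr rfl fun A _ => ?_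
        rw [bipartiteAbove, filter_mem_eq_inter, inter_eq_right.2 upperCovers_subset]
    _ = ∑ B ∈ F, #{A ∈ F | B ∈ upperCovers F A} :=
        sum_card_bipartiteAbove_eq_sum_card_bipartiteBelow _
    _ ≤ ∑ B ∈ F, #B := sum_le_sum fun B _ => card_filter_mem_upperCovers_le hF B

noncomputable def coverHittingSet (F : Finset (Finset ℕ)) (A : Finset ℕ) : Finset ℕ :=
  (upperCovers F A).image (sdiffMin A)

theorem subset_of_subset_union (hF : UnionClosed F) (hA : A ∈ F) (hB : B ∈ F)
    (hZ : Disjoint Z (coverHittingSet F A)) (hBZ : B ⊆ A ∪ Z) : B ⊆ A := by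
  by_contra hBA
  obtain ⟨C, hC, hCAB⟩ := exists_mem_upperCovers_subset (hF A hA B hB) (left_lt_sup.2 hBA)
  have hx := mem_sdiff.1 (sdiffMin_mem (mem_upperCovers.1 hC).prop.2)
  have hxZ : sdiffMin A C ∈ Z := by
    have := hBZ ((mem_union.1 (hCAB hx.1)).resolve_left hx.2)
    exact (mem_union.1 this).resolve_left hx.2
  exact disjoint_left.1 hZ hxZ (mem_image_of_mem _ hC)

noncomputable def freePart (F : Finset (Finset ℕ)) (A : Finset ℕ) : Finset ℕ :=
  F.sup id \ (A ∪ coverHittingSet F A)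

/-- Reimer's lemma: the intervals `[A, A ∪ freePart F A]`, `A ∈ F`, are pairwise disjoint. -/
theorem sum_two_pow_card_freePart_le (hF : UnionClosed F) :
    ∑ A ∈ F, 2 ^ #(freePart F A) ≤ 2 ^ #(F.sup id) := by
  calc ∑ A ∈ F, 2 ^ #(freePart F A)
      = #(F.sigma fun A => (freePart F A).powerset) := by simp [card_powerset]
    _ ≤ #(F.sup id).powerset := by
        refine card_le_card_of_injOn (fun p => p.1 ∪ p.2) ?_ ?_
        · rintro ⟨A, Z⟩ h
          simp only [coe_sigma, Set.mem_sigma_iff, mem_coe, mem_powerset, freePart] at h ⊢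
          exact union_subset (le_sup (f := id) h.1) (h.2.trans sdiff_subset)
        · rintro ⟨A, Z⟩ h ⟨A', Z'⟩ h' he
          simp only [coe_sigma, Set.mem_sigma_iff, mem_coe, mem_powerset, freePart,
            subset_sdiff] at h h' he
          have hA : A = A' := (subset_of_subset_union hF h'.1 h.1
            (h'.2.2.mono_right subset_union_right) (subset_union_left.trans he.le)).antisymm
            (subset_of_subset_union hF h.1 h'.1
              (h.2.2.mono_right subset_union_right) (subset_union_left.trans he.ge))
          subst hA
          rw [← union_sdiff_cancel_left (h.2.2.mono_right subset_union_left).symm,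
            ← union_sdiff_cancel_left (h'.2.2.mono_right subset_union_left).symm, he]
    _ = 2 ^ #(F.sup id) := card_powerset _

/-- **Reimer's inequality**. -/
theorem card_mul_logb_card_le (hF : UnionClosed F) :
    (#F : ℝ) * logb 2 #F ≤ 2 * ∑ A ∈ F, (#A : ℝ) := by
  rcases F.eq_empty_or_nonempty with rfl | hne
  · simp
  have hfree : ∀ A ∈ F, (#(F.sup id) : ℝ) - #A - #(upperCovers F A) ≤ #(freePart F A) := by
    intro A _
    have h₁ := card_le_card_sdiff_add_card (s := F.sup id) (t := A ∪ coverHittingSet F A)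
    have h₂ := card_union_le A (coverHittingSet F A)
    have h₃ : #(coverHittingSet F A) ≤ #(upperCovers F A) := card_image_le
    have : #(F.sup id) ≤ #(freePart F A) + #A + #(upperCovers F A) := by
      rw [freePart]; omega
    have := (Nat.cast_le (α := ℝ)).2 this
    push_cast at this
    linarith
  have hpow := sum_le_card_mul_sub_logb hne (e := fun A => (#(freePart F A) : ℝ))
    (n := #(F.sup id)) (by exact_mod_cast sum_two_pow_card_freePart_le hF)
  have hcov : ∑ A ∈ F, (#(upperCovers F A) : ℝ) ≤ ∑ A ∈ F, (#A : ℝ) := by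
    exact_mod_cast sum_card_upperCovers_le hF
  have := (sum_le_sum hfree).trans hpow
  rw [sum_sub_distrib, sum_sub_distrib, sum_const, nsmul_eq_mul] at this
  linarith

end Reimer

theorem mul_logb_le_mul_logb_sub_one_add_two {n m : ℝ} (hn : 2 ≤ n) (hm : m ≤ n - 1) :
    m * logb 2 n ≤ m * logb 2 (n - 1) + 2 := by
  have hn₁ : 0 < n - 1 := by linarith
  have hlog : log n - log (n - 1) ≤ 1 / (n - 1) := by
    have := log_le_sub_one_of_pos (div_pos (by linarith : 0 < n) hn₁)
    rw [log_div (by positivity) hn₁.ne'] at this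
    exact this.trans_eq (by field_simp; ring)
  have hlog₀ : 0 ≤ log n - log (n - 1) :=
    sub_nonneg.2 (log_le_log hn₁ (sub_le_self n zero_le_one))
  have hlog₂ := log_pos one_lt_two
  calc m * logb 2 n = m * logb 2 (n - 1) + m * (log n - log (n - 1)) / log 2 := by
        rw [logb, logb]; ring
    _ ≤ m * logb 2 (n - 1) + (n - 1) * (1 / (n - 1)) / log 2 := by gcongr
    _ ≤ m * logb 2 (n - 1) + 2 := by
        rw [mul_one_div_cancel hn₁.ne', add_le_add_iff_left, div_le_iff₀ hlog₂]
        linarith [log_two_gt_d9]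

section Compression

variable {F : Finset (Finset ℕ)} {x y : ℕ}

theorem sum_card_erase_add_card_filter_mem (F : Finset (Finset ℕ)) (x : ℕ) :
    ∑ A ∈ F, #(A.erase x) + #{A ∈ F | x ∈ A} = ∑ A ∈ F, #A := by
  rw [card_filter, ← sum_add_distrib]
  refine sum_congr rfl fun A _ => ?_
  split_ifs with hx
  · exact card_erase_add_one hx
  · rw [erase_eq_of_notMem hx, add_zero]

theorem sup_image_erase (F : Finset (Finset ℕ)) (x : ℕ) :
    (F.image (·.erase x)).sup id = (F.sup id).erase x := by
  ext y
  simp only [mem_sup, mem_image, id, mem_erase]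
  constructor
  · rintro ⟨_, ⟨A, hA, rfl⟩, hy⟩
    exact ⟨(mem_erase.1 hy).1, A, hA, (mem_erase.1 hy).2⟩
  · rintro ⟨hyx, A, hA, hy⟩
    exact ⟨_, ⟨A, hA, rfl⟩, mem_erase.2 ⟨hyx, hy⟩⟩

theorem card_filter_mem_pos (hx : x ∈ F.sup id) : 0 < #{A ∈ F | x ∈ A} := by
  obtain ⟨A, hA, hxA⟩ := mem_sup.1 hx
  exact card_pos.2 ⟨A, mem_filter.2 ⟨hA, hxA⟩⟩

/-- If `y` is a twin of `x`, deleting `x` from every member is injective and keeps the family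
union-closed; it loses `#{A ∈ F | x ∈ A} ≥ 1` from the total size. -/
theorem card_mul_add_two_le_of_twin (hF : UnionClosed F) (hx : x ∈ F.sup id) (hyx : y ≠ x)
    (htwin : {A ∈ F | y ∈ A} = {A ∈ F | x ∈ A}) {L : ℝ}
    (ih : ∀ G, UnionClosed G → G.sup id = (F.sup id).erase x →
      (#G : ℝ) * L ≤ 2 * ∑ A ∈ G, (#A : ℝ)) :
    (#F : ℝ) * L + 2 ≤ 2 * ∑ A ∈ F, (#A : ℝ) := by
  have hmem : ∀ A ∈ F, (y ∈ A ↔ x ∈ A) := fun A hA => by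
    simpa [hA] using congrArg (A ∈ ·) htwin
  have hinj : Set.InjOn (fun A : Finset ℕ => A.erase x) (F : Set (Finset ℕ)) := by
    intro A hA B hB hAB
    ext z
    by_cases hz : z = x
    · subst hz
      rw [← hmem A hA, ← hmem B hB]
      simpa [hyx] using congrArg (y ∈ ·) hAB
    · simpa [hz] using congrArg (z ∈ ·) hAB
  have hG := ih _ (hF.image fun A B => erase_union_distrib A B x) (sup_image_erase F x)
  rw [card_image_of_injOn hinj, sum_image hinj] at hG
  have hsum : (∑ A ∈ F, (#(A.erase x) : ℝ)) + #{A ∈ F | x ∈ A} = ∑ A ∈ F, (#A : ℝ) := by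
    exact_mod_cast sum_card_erase_add_card_filter_mem F x
  have hpos : (1 : ℝ) ≤ #{A ∈ F | x ∈ A} := by exact_mod_cast card_filter_mem_pos hx
  linarith

/-- Without twins, `F` splits into the sets containing `x` (with `x` deleted) and those avoiding
it; both parts are union-closed with union `(⋃F).erase x`. -/
theorem card_mul_add_two_le_of_split (hF : UnionClosed F) (hx : x ∈ F.sup id)
    (hsplit : ∀ y ∈ F.sup id, y ≠ x → ¬{A ∈ F | y ∈ A} ⊆ {A ∈ F | x ∈ A}) {L : ℝ}
    (ih : ∀ G, UnionClosed G → G.sup id = (F.sup id).erase x →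
      (#G : ℝ) * L ≤ 2 * ∑ A ∈ G, (#A : ℝ)) :
    (#F : ℝ) * L + 2 ≤ 2 * ∑ A ∈ F, (#A : ℝ) := by
  set F₁ := {A ∈ F | x ∈ A}
  set F₀ := {A ∈ F | x ∉ A}
  obtain ⟨A₀, hA₀, -⟩ := mem_sup.1 hx
  have hsup₁ : F₁.sup id = F.sup id :=
    le_antisymm (sup_mono (filter_subset _ _))
      (le_sup (f := id) (mem_filter.2 ⟨hF.sup_mem ⟨A₀, hA₀⟩, hx⟩))
  have hinj : Set.InjOn (fun A : Finset ℕ => A.erase x) (F₁ : Set (Finset ℕ)) :=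
    fun A hA B hB h => by
      rw [← insert_erase (mem_filter.1 hA).2, ← insert_erase (mem_filter.1 hB).2]
      exact congrArg (insert x) h
  have h₁ := ih _ ((hF.filter fun A B hA _ => mem_union_left B hA).image
    fun A B => erase_union_distrib A B x) (by rw [sup_image_erase, hsup₁])
  rw [card_image_of_injOn hinj, sum_image hinj] at h₁
  have hsup₀ : F₀.sup id = (F.sup id).erase x := by
    refine le_antisymm (Finset.sup_le fun A hA => subset_erase.2
      ⟨le_sup (f := id) (mem_filter.1 hA).1, (mem_filter.1 hA).2⟩) fun y hy => ?_
    obtain ⟨hyx, hy⟩ := mem_erase.1 hy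
    by_contra hy₀
    refine hsplit y hy hyx fun A hA => mem_filter.2 ⟨(mem_filter.1 hA).1, ?_⟩
    by_contra hxA
    exact hy₀ (mem_sup.2 ⟨A, mem_filter.2 ⟨(mem_filter.1 hA).1, hxA⟩, (mem_filter.1 hA).2⟩)
  have h₀ := ih F₀ (hF.filter fun A B hA hB => by simp [hA, hB]) hsup₀
  have hsum₁ : (∑ A ∈ F₁, (#(A.erase x) : ℝ)) + #F₁ = ∑ A ∈ F₁, (#A : ℝ) := by
    have := sum_card_erase_add_card_filter_mem F₁ x
    rw [filter_true_of_mem fun A hA => (mem_filter.1 hA).2] at this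
    exact_mod_cast this
  have hcard : (#F₁ : ℝ) + #F₀ = #F := by
    exact_mod_cast card_filter_add_card_filter_not (s := F) (x ∈ ·)
  have hsum : ∑ A ∈ F₁, (#A : ℝ) + ∑ A ∈ F₀, (#A : ℝ) = ∑ A ∈ F, (#A : ℝ) :=
    sum_filter_add_sum_filter_not F _ _
  have hpos : (1 : ℝ) ≤ #F₁ := by exact_mod_cast card_filter_mem_pos hx
  have hL : (#F : ℝ) * L = #F₁ * L + #F₀ * L := by rw [← hcard, add_mul]
  linarith

theorem card_mul_add_two_le_of_min (hF : UnionClosed F) {x : ℕ} (hx : x ∈ F.sup id)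
    (hmin : ∀ y ∈ F.sup id, #{A ∈ F | x ∈ A} ≤ #{A ∈ F | y ∈ A}) {L : ℝ}
    (ih : ∀ G, UnionClosed G → G.sup id = (F.sup id).erase x →
      (#G : ℝ) * L ≤ 2 * ∑ A ∈ G, (#A : ℝ)) :
    (#F : ℝ) * L + 2 ≤ 2 * ∑ A ∈ F, (#A : ℝ) := by
  by_cases h : ∃ y ∈ F.sup id, y ≠ x ∧ {A ∈ F | y ∈ A} ⊆ {A ∈ F | x ∈ A}
  · obtain ⟨y, hy, hyx, hsub⟩ := h
    exact card_mul_add_two_le_of_twin hF hx hyx (eq_of_subset_of_card_le hsub (hmin y hy)) ih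
  · push Not at h
    exact card_mul_add_two_le_of_split hF hx (fun y hy hyx => h y hy hyx) ih

theorem card_mul_logb_card_sup_le (hF : UnionClosed F) :
    (#F : ℝ) * logb 2 #(F.sup id) ≤ 2 * ∑ A ∈ F, (#A : ℝ) := by
  induction hn : #(F.sup id) using Nat.strong_induction_on generalizing F with
  | _ n ih =>
  rcases le_or_gt n #F with hle | hlt
  · rcases n.eq_zero_or_pos with rfl | hpos
    · simp only [CharP.cast_eq_zero, logb_zero, mul_zero]
      positivity
    · calc (#F : ℝ) * logb 2 n ≤ #F * logb 2 #F := by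
            gcongr
            exact one_lt_two
        _ ≤ 2 * ∑ A ∈ F, (#A : ℝ) := card_mul_logb_card_le hF
  · obtain ⟨x, hx, hmin⟩ := exists_min_image (F.sup id) (fun y => #{A ∈ F | y ∈ A})
      (card_pos.1 (by omega))
    have hstep := card_mul_add_two_le_of_min hF hx hmin (L := logb 2 ((n - 1 : ℕ) : ℝ))
      fun G hG hGsup => ih (n - 1) (by omega) hG (by rw [hGsup, card_erase_of_mem hx, hn])
    have hF₁ : 1 ≤ #F := card_filter_mem_pos hx |>.trans_le (card_filter_le _ _)
    rw [Nat.cast_sub (by omega), Nat.cast_one] at hstep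
    have hn₂ : (2 : ℝ) ≤ n := by exact_mod_cast (by omega : 2 ≤ n)
    have := mul_logb_le_mul_logb_sub_one_add_two (m := #F) hn₂
      (by rw [le_sub_iff_add_le]; exact_mod_cast hlt)
    linarith

end Compression

theorem density_nonneg (F : Finset (Finset ℕ)) : 0 ≤ density F := by
  unfold density
  positivity

theorem bddBelow_densities (n : ℕ) :
    BddBelow {d : ℝ | ∃ F : Finset (Finset ℕ), UnionClosed F ∧ #(F.sup id) = n ∧ d = density F} :=
  ⟨0, by rintro _ ⟨F, -, -, rfl⟩; exact density_nonneg F⟩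

theorem minDensity_mul_le_sum_card {G : Finset (Finset ℕ)} (hG : UnionClosed G) :
    minDensity #(G.sup id) * (#(G.sup id) * #G) ≤ ∑ A ∈ G, (#A : ℝ) := by
  rcases (by positivity : (0 : ℝ) ≤ #(G.sup id) * #G).eq_or_lt with h | h
  · rw [← h, mul_zero]
    positivity
  · rw [← le_div_iff₀ h]
    exact csInf_le (bddBelow_densities _) ⟨G, hG, rfl, rfl⟩

theorem logb_div_le_minDensity (k : ℕ) : logb 2 k / (2 * k) ≤ minDensity k := by
  refine le_csInf ⟨_, {range k}, fun A hA B hB => by simp_all, by simp, rfl⟩ ?_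
  rintro _ ⟨G, hG, rfl, rfl⟩
  rcases (#(G.sup id)).eq_zero_or_pos with h | h
  · simpa [h] using density_nonneg G
  have hG₀ : 0 < #G := card_pos.2 (nonempty_of_ne_empty (by rintro rfl; simp at h))
  rw [density, div_le_div_iff₀ (by positivity) (by positivity)]
  have := card_mul_logb_card_sup_le hG
  have hk : (0 : ℝ) < #(G.sup id) := by exact_mod_cast h
  nlinarith

section Trace

variable {F : Finset (Finset ℕ)} {S : Finset ℕ}

/-- On the class `{A ∈ F | A ∪ S = C}`, the trace `A ↦ A ∩ S` is injective onto a union-closed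
family with union `S`. -/
theorem minDensity_mul_le_sum_card_inter_of_union_eq (hF : UnionClosed F) (hS : S ∈ F)
    (C : Finset ℕ) :
    minDensity #S * (#S * #{A ∈ F | A ∪ S = C}) ≤ ∑ A ∈ F with A ∪ S = C, (#(A ∩ S) : ℝ) := by
  set P := {A ∈ F | A ∪ S = C}
  rcases P.eq_empty_or_nonempty with hP | ⟨A₀, hA₀⟩
  · simp [hP]
  obtain ⟨hA₀F, hA₀C⟩ := mem_filter.1 hA₀
  have hinj : Set.InjOn (· ∩ S) (P : Set (Finset ℕ)) := fun A hA B hB h =>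
    eq_of_inf_eq_sup_eq h ((mem_filter.1 hA).2.trans (mem_filter.1 hB).2.symm)
  have hPUC : UnionClosed P :=
    hF.filter fun A B hA hB => by rw [union_union_distrib_right, hA, hB, union_self]
  have hCP : A₀ ∪ S ∈ P := mem_filter.2 ⟨hF _ hA₀F _ hS, by rw [union_assoc, union_self, hA₀C]⟩
  have hsup : (P.image (· ∩ S)).sup id = S :=
    le_antisymm (Finset.sup_le fun _ h => by
        obtain ⟨A, -, rfl⟩ := mem_image.1 h
        exact inter_subset_right)
      (le_sup (f := id) (mem_image.2 ⟨A₀ ∪ S, hCP, union_inter_cancel_right⟩))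
  have := minDensity_mul_le_sum_card
    (hPUC.image (f := (· ∩ S)) fun A B => union_inter_distrib_right A B S)
  rwa [hsup, card_image_of_injOn hinj, sum_image hinj] at this

theorem minDensity_mul_le_sum_card_inter (hF : UnionClosed F) (hS : S ∈ F) :
    minDensity #S * (#S * #F) ≤ ∑ A ∈ F, (#(A ∩ S) : ℝ) := by
  have hmaps : Set.MapsTo (· ∪ S) (F : Set (Finset ℕ)) F := fun A hA => hF A hA S hS
  calc minDensity #S * (#S * #F)
      = ∑ C ∈ F, minDensity #S * (#S * #{A ∈ F | A ∪ S = C}) := by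
        rw [card_eq_sum_card_fiberwise hmaps, Nat.cast_sum, mul_sum, mul_sum]
    _ ≤ ∑ C ∈ F, ∑ A ∈ F with A ∪ S = C, (#(A ∩ S) : ℝ) :=
        sum_le_sum fun C _ => minDensity_mul_le_sum_card_inter_of_union_eq hF hS C
    _ = ∑ A ∈ F, (#(A ∩ S) : ℝ) := sum_fiberwise_of_maps_to hmaps _

theorem exists_minDensity_mul_card_le_card_filter_mem (hF : UnionClosed F) (hS : S ∈ F)
    (hSne : S.Nonempty) : ∃ a ∈ S, minDensity #S * #F ≤ #{A ∈ F | a ∈ A} := by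
  refine exists_le_of_sum_le hSne ?_
  have hcount : ∑ a ∈ S, #{A ∈ F | a ∈ A} = ∑ A ∈ F, #(A ∩ S) := by
    simpa [bipartiteAbove, bipartiteBelow, filter_mem_eq_inter, inter_comm] using
      sum_card_bipartiteAbove_eq_sum_card_bipartiteBelow (s := S) (t := F) (fun a A => a ∈ A)
  calc ∑ _ ∈ S, minDensity #S * #F = minDensity #S * (#S * #F) := by
        rw [sum_const, nsmul_eq_mul]; ring
    _ ≤ ∑ A ∈ F, (#(A ∩ S) : ℝ) := minDensity_mul_le_sum_card_inter hF hS
    _ = ∑ a ∈ S, (#{A ∈ F | a ∈ A} : ℝ) := by exact_mod_cast hcount.symm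

end Trace

theorem stmt_11_general (F : Finset (Finset ℕ)) (hUC : UnionClosed F)
    (k : ℕ) (hk : ∃ S ∈ F, S.Nonempty ∧ S.card = k) :
    (∃ a ∈ F.sup id, ((F.filter (fun S => a ∈ S)).card : ℝ) ≥
        minDensity k * (F.card : ℝ)) ∧
      minDensity k * (F.card : ℝ) ≥
        (Real.logb 2 (k : ℝ) / (2 * (k : ℝ))) * (F.card : ℝ) := by
  obtain ⟨S, hS, hSne, rfl⟩ := hk
  obtain ⟨a, haS, ha⟩ := exists_minDensity_mul_card_le_card_filter_mem hUC hS hSne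
  exact ⟨⟨a, le_sup (f := id) hS haS, ha⟩,
    mul_le_mul_of_nonneg_right (logb_div_le_minDensity _) (Nat.cast_nonneg _)⟩

/-- If `k ≥ 1` is the minimum cardinality of a nonempty set of `F`, then
`max_{a ∈ ⋃F} |F_a| ≥ s_k·|F| ≥ (log₂ k/(2k))·|F|`. -/
theorem stmt_11 (F : Finset (Finset ℕ)) (hUC : UnionClosed F)
    (k : ℕ) (hk1 : 1 ≤ k) (hk : ∃ S ∈ F, S.Nonempty ∧ S.card = k)
    (hkmin : ∀ S ∈ F, S.Nonempty → k ≤ S.card) :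
    (∃ a ∈ F.sup id, ((F.filter (fun S => a ∈ S)).card : ℝ) ≥
        minDensity k * (F.card : ℝ)) ∧
      minDensity k * (F.card : ℝ) ≥
        (Real.logb 2 (k : ℝ) / (2 * (k : ℝ))) * (F.card : ℝ) :=
  stmt_11_general F hUC k hk
end

section
/- For every real number x ≥ 4, setting n := 2x²/log₂(x), one has x/n ≥ (1/2)·√(log₂(n)/n). (Equivalently, the inverse g of the increasing function f : [4, ∞) → [16, ∞), f(x) = 2x²/log₂(x), satisfies g(n)/n ≥ (1/2)·√(log₂(n)/n) for all n ≥ 16.) -/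
/-- For every real `x ≥ 4`, setting `n := 2x²/log₂ x`, one has
`x/n ≥ (1/2)·√(log₂ n / n)`. -/
theorem stmt_12 (x : ℝ) (hx : 4 ≤ x) (n : ℝ) (hn : n = 2 * x ^ 2 / Real.logb 2 x) :
    x / n ≥ (1 / 2) * Real.sqrt (Real.logb 2 n / n) := by
  have hx0 : (0:ℝ) < x := by linarith
  have hL2 : (2:ℝ) ≤ Real.logb 2 x := by
    have h4 : Real.logb 2 4 = 2 := by
      rw [show (4:ℝ) = 2 ^ (2:ℕ) by norm_num, Real.logb_pow, Real.logb_self_eq_one] <;> norm_num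
    calc (2:ℝ) = Real.logb 2 4 := h4.symm
      _ ≤ Real.logb 2 x := (Real.logb_le_logb (b := 2) (by norm_num) (by norm_num) hx0).mpr hx
  set L := Real.logb 2 x with hLdef
  have hL0 : (0:ℝ) < L := by linarith
  have hn0 : (0:ℝ) < n := by rw [hn]; positivity
  have hnL : n * L = 2 * x ^ 2 := by rw [hn]; field_simp
  have hnx2 : n ≤ x ^ 2 := by
    rw [hn, div_le_iff₀ hL0]; nlinarith
  have hlogn : Real.logb 2 n ≤ 2 * L := by
    have h := (Real.logb_le_logb (b := 2) (by norm_num) hn0 (by positivity)).mpr hnx2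
    rwa [Real.logb_pow] at h
  have h1 : Real.logb 2 n / n / 4 ≤ (x / n) ^ 2 := by
    rw [div_pow, div_div, div_le_div_iff₀ (by positivity) (by positivity)]
    nlinarith [hn0.le, hL0.le]
  have heq : (1 / 2 : ℝ) * Real.sqrt (Real.logb 2 n / n)
      = Real.sqrt (Real.logb 2 n / n / 4) := by
    rw [show Real.logb 2 n / n / 4 = (1/2:ℝ)^2 * (Real.logb 2 n / n) by ring,
      Real.sqrt_mul (by positivity), Real.sqrt_sq (by norm_num)]
  rw [ge_iff_le, heq]
  calc Real.sqrt (Real.logb 2 n / n / 4) ≤ Real.sqrt ((x / n) ^ 2) := Real.sqrt_le_sqrt h1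
    _ = x / n := Real.sqrt_sq (by positivity)
end

section
/- Let F be a finite union-closed family of finite sets with nonempty union. If F contains a nonempty set S with |S| ≤ 2, then there exists a ∈ ⋃F such that |F_a| ≥ |F|/2. -/
/-!
Write a nonempty set of size at most two as `{a, b}` (with `a = b` allowed). Then `F_a ∪ F_b`
consists of the members meeting `{a, b}` and `F_a ∩ F_b` of those containing it, and
`T ↦ T ∪ {a, b}` injects the members disjoint from `{a, b}` into the latter. Hence
`|F_a| + |F_b| ≥ |F|`, and the larger of `F_a`, `F_b` has at least `|F| / 2` members.
-/

open Finset

variable {α : Type*} [DecidableEq α]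

theorem card_filter_disjoint_le_card_filter_superset {F : Finset (Finset α)} {S : Finset α}
    (hS : ∀ T ∈ F, T ∪ S ∈ F) :
    #(F.filter (Disjoint · S)) ≤ #(F.filter (S ⊆ ·)) := by
  refine card_le_card_of_injOn (· ∪ S) (fun T hT => ?_) (fun T₁ h₁ T₂ h₂ h => ?_)
  · simp only [coe_filter, Set.mem_ofPred_eq] at hT ⊢
    exact ⟨hS T hT.1, subset_union_right⟩
  · simp only [coe_filter, Set.mem_ofPred_eq] at h₁ h₂
    rw [← union_sdiff_cancel_right h₁.2, ← union_sdiff_cancel_right h₂.2]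
    exact congrArg (· \ S) h

theorem card_le_card_filter_mem_add_card_filter_mem {F : Finset (Finset α)} {a b : α}
    (hab : ∀ T ∈ F, T ∪ {a, b} ∈ F) :
    #F ≤ #(F.filter (a ∈ ·)) + #(F.filter (b ∈ ·)) := by
  have hdisjoint : F.filter (fun T => ¬(a ∈ T ∨ b ∈ T)) = F.filter (Disjoint · {a, b}) := by
    refine filter_congr fun T _ => ?_
    simp [disjoint_insert_right, disjoint_singleton_right]
  have hsuperset : F.filter ({a, b} ⊆ ·) = F.filter (fun T => a ∈ T ∧ b ∈ T) := by
    refine filter_congr fun T _ => ?_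
    simp [insert_subset_iff]
  calc #F = #(F.filter (fun T => a ∈ T ∨ b ∈ T)) + #(F.filter (fun T => ¬(a ∈ T ∨ b ∈ T))) :=
        (card_filter_add_card_filter_not _).symm
    _ ≤ #(F.filter (fun T => a ∈ T ∨ b ∈ T)) + #(F.filter (fun T => a ∈ T ∧ b ∈ T)) := by
        rw [hdisjoint, ← hsuperset]
        exact Nat.add_le_add_left (card_filter_disjoint_le_card_filter_superset hab) _
    _ = #(F.filter (a ∈ ·)) + #(F.filter (b ∈ ·)) := by
        rw [filter_or, filter_and, card_union_add_card_inter]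

theorem Finset.exists_eq_pair_of_card_le_two {S : Finset α} (hne : S.Nonempty)
    (hcard : #S ≤ 2) : ∃ a b, S = {a, b} := by
  obtain h | h : #S = 1 ∨ #S = 2 := by have := hne.card_pos; omega
  · obtain ⟨a, rfl⟩ := card_eq_one.1 h
    exact ⟨a, a, by simp⟩
  · obtain ⟨a, b, -, rfl⟩ := card_eq_two.1 h
    exact ⟨a, b, rfl⟩

theorem stmt_13_general (F : Finset (Finset ℕ)) (hUC : UnionClosed F)
    (hS : ∃ S ∈ F, S.Nonempty ∧ S.card ≤ 2) :
    ∃ a ∈ F.sup id, ((F.filter (fun S => a ∈ S)).card : ℝ) ≥ (F.card : ℝ) / 2 := by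
  obtain ⟨S, hSF, hSne, hScard⟩ := hS
  obtain ⟨a, b, rfl⟩ := exists_eq_pair_of_card_le_two hSne hScard
  have hsum := card_le_card_filter_mem_add_card_filter_mem fun T hT => hUC T hT _ hSF
  have hmem : ∀ x ∈ ({a, b} : Finset ℕ), x ∈ F.sup id := fun x hx => mem_sup.2 ⟨_, hSF, hx⟩
  suffices ∃ x ∈ ({a, b} : Finset ℕ), #F ≤ #(F.filter (x ∈ ·)) * 2 by
    obtain ⟨x, hx, hle⟩ := this
    refine ⟨x, hmem x hx, ?_⟩
    rw [ge_iff_le, div_le_iff₀ two_pos]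
    exact_mod_cast hle
  rcases le_total #(F.filter (a ∈ ·)) #(F.filter (b ∈ ·)) with h | h
  · exact ⟨b, by simp, by omega⟩
  · exact ⟨a, by simp, by omega⟩

theorem stmt_13 (F : Finset (Finset ℕ)) (hUC : UnionClosed F)
    (hne : (F.sup id).Nonempty)
    (hS : ∃ S ∈ F, S.Nonempty ∧ S.card ≤ 2) :
    ∃ a ∈ F.sup id, ((F.filter (fun S => a ∈ S)).card : ℝ) ≥ (F.card : ℝ) / 2 :=
  stmt_13_general F hUC hS
end
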